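/- Let f be a finite partial function from ℕ to ℕ and let Ξ be a family of completions of f which blocks at width n for some n ≥ 1. Then there exists a total function f^∞ : ℕ → ℕ with f ⊆ f^∞ such that every finite partial function g with f ⊆ g ⊆ f^∞ belongs to Ξ. -/

import Mathlib

/-- A partial function from ℕ to ℕ, represented via `Option`. -/
def PFn := ℕ → Option ℕ

/-- The domain of a partial function. -/
def PFn.dom (f : PFn) : Set ℕ := {x | f x ≠ none}

/-- `f` has finite domain (i.e. `f ∈ ω^{⊂ω}`). -/
def PFn.FinDom (f : PFn) : Prop := f.dom.Finite

/-- `PExt f g` means `f ⊆ g` as partial functions. -/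
def PExt (f g : PFn) : Prop := ∀ x y, f x = some y → g x = some y

/-- `Branching n f k U`: `U` is an `n`-branching set of extensions of `f` of length `k`. -/
inductive Branching (n : ℕ) : PFn → ℕ → Set PFn → Prop
  | base (f : PFn) (x : ℕ) (U : Set PFn) (hx : f x = none)
      (hmem : ∀ g ∈ U, PExt f g ∧ PFn.dom g = PFn.dom f ∪ {x})
      (hcard : U.ncard = n) : Branching n f 1 U
  | step (f : PFn) (k : ℕ) (U₀ : Set PFn) (Ug : PFn → Set PFn)
      (h₀ : Branching n f k U₀)
      (hg : ∀ g ∈ U₀, Branching n g 1 (Ug g)) :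
      Branching n f (k + 1) (⋃ g ∈ U₀, Ug g)

/-- `U` is an `n`-branching set of extensions of `f` (of some length `k ≥ 1`). -/
def IsBranching (n : ℕ) (f : PFn) (U : Set PFn) : Prop := ∃ k, 1 ≤ k ∧ Branching n f k U

/-- `Xi` is a family of completions of `f`. -/
def FamilyOfCompletions (f : PFn) (Xi : Set PFn) : Prop :=
  (∀ g ∈ Xi, PExt f g) ∧ (∀ g ∈ Xi, ∀ h, PExt f h → PExt h g → h ∈ Xi)

/-- `Xi` blocks at width `n`: every `n`-branching set of extensions of `f` meets `Xi`. -/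
def Blocks (f : PFn) (Xi : Set PFn) (n : ℕ) : Prop :=
  ∀ U, IsBranching n f U → (U ∩ Xi).Nonempty

/-- The members of `Xi` extending `g`. -/
def Restrict (Xi : Set PFn) (g : PFn) : Set PFn := {h ∈ Xi | PExt g h}

/-!
Call a finite `g` good if `Ξ` is downward closed above `g` and blocks at width `n` over `g`
(members of a branching set over `g` extend `g`, so this is the same as `Ξ↾g` blocking).
For a good `g` and a fresh input `x`, the one-point extensions `g[x ↦ y]`, `y < n`, form a
branching set, and some `g[x ↦ y]` is good again: otherwise branching sets witnessing the
failure at each of them, padded to a common length and grafted on, would form a branching set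
over `g` missing `Ξ`. Extending along the inputs `0, 1, 2, …` gives a chain of good functions
whose union is a total `F`; a finite `g` with `f ⊆ g ⊆ F` lies below a member of the chain,
which has an extension in `Ξ`, so `g ∈ Ξ` by downward closure.
-/

instance : Inhabited PFn := ⟨fun _ => none⟩

theorem PExt.refl (f : PFn) : PExt f f := fun _ _ h => h

theorem PExt.trans {f g h : PFn} (hfg : PExt f g) (hgh : PExt g h) : PExt f h :=
  fun x y hx => hgh x y (hfg x y hx)

instance : Std.Refl PExt := ⟨PExt.refl⟩

instance : IsTrans PFn PExt := ⟨fun _ _ _ => PExt.trans⟩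

theorem PFn.FinDom.exists_eq_none {f : PFn} (hf : f.FinDom) : ∃ x, f x = none := by
  obtain ⟨x, hx⟩ := hf.infinite_compl.nonempty
  exact ⟨x, by simpa [PFn.dom] using hx⟩

def PFn.upd (f : PFn) (x y : ℕ) : PFn := fun z => if z = x then some y else f z

theorem PFn.upd_self (f : PFn) (x y : ℕ) : f.upd x y x = some y := if_pos rfl

theorem PFn.pext_upd {f : PFn} {x : ℕ} (hx : f x = none) (y : ℕ) : PExt f (f.upd x y) := by
  intro z w hz
  have hzx : z ≠ x := by rintro rfl; simp [hx] at hz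
  simpa [PFn.upd, hzx] using hz

theorem PFn.dom_upd (f : PFn) (x y : ℕ) : (f.upd x y).dom = f.dom ∪ {x} := by
  ext z
  by_cases hzx : z = x <;> simp [PFn.dom, PFn.upd, hzx]

theorem PFn.FinDom.upd {f : PFn} (hf : f.FinDom) (x y : ℕ) : (f.upd x y).FinDom := by
  rw [PFn.FinDom, f.dom_upd]
  exact hf.union (Set.finite_singleton x)

theorem PFn.upd_injective (f : PFn) (x : ℕ) : Function.Injective (f.upd x) := fun a b hab => by
  simpa [PFn.upd_self] using congrFun hab x

def DownClosedAbove (f : PFn) (Xi : Set PFn) : Prop :=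
  ∀ g ∈ Xi, ∀ h, PExt f h → PExt h g → h ∈ Xi

theorem DownClosedAbove.mono {f g : PFn} {Xi : Set PFn} (hXi : DownClosedAbove f Xi)
    (hfg : PExt f g) : DownClosedAbove g Xi :=
  fun h hh k hgk hkh => hXi h hh k (hfg.trans hgk) hkh

def Refines (V U : Set PFn) : Prop := ∀ h ∈ V, ∃ g ∈ U, PExt g h

theorem Refines.refl (U : Set PFn) : Refines U U := fun h hh => ⟨h, hh, PExt.refl h⟩

theorem Refines.trans {W V U : Set PFn} (hWV : Refines W V) (hVU : Refines V U) :
    Refines W U := fun h hh => by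
  obtain ⟨g, hg, hgh⟩ := hWV h hh
  obtain ⟨e, he, heg⟩ := hVU g hg
  exact ⟨e, he, heg.trans hgh⟩

theorem Refines.inter_eq_empty {f : PFn} {Xi V U : Set PFn} (hXi : DownClosedAbove f Xi)
    (hU : ∀ g ∈ U, PExt f g) (hVU : Refines V U) (hUXi : U ∩ Xi = ∅) : V ∩ Xi = ∅ := by
  refine Set.eq_empty_of_forall_notMem fun h ⟨hV, hXih⟩ => ?_
  obtain ⟨g, hg, hgh⟩ := hVU h hV
  exact hUXi.subset ⟨hg, hXi h hXih g (hU g hg) hgh⟩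

namespace Branching

variable {n : ℕ}

theorem pext_of_mem {f : PFn} {k : ℕ} {U : Set PFn} (h : Branching n f k U) :
    ∀ g ∈ U, PExt f g := by
  induction h with
  | base _ _ _ _ hmem => exact fun g hg => (hmem g hg).1
  | step _ _ _ _ _ _ ih₀ ihg =>
    simp only [Set.mem_iUnion]
    rintro g ⟨g₀, hg₀, hg⟩
    exact (ih₀ g₀ hg₀).trans (ihg g₀ hg₀ g hg)

theorem finDom_of_mem {f : PFn} {k : ℕ} {U : Set PFn} (h : Branching n f k U)
    (hf : f.FinDom) : ∀ g ∈ U, g.FinDom := by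
  induction h with
  | base _ x _ _ hmem =>
    intro g hg
    rw [PFn.FinDom, (hmem g hg).2]
    exact hf.union (Set.finite_singleton x)
  | step _ _ _ _ _ _ ih₀ ihg =>
    simp only [Set.mem_iUnion]
    rintro g ⟨g₀, hg₀, hg⟩
    exact ihg g₀ hg₀ (ih₀ hf g₀ hg₀) g hg

theorem image_upd {f : PFn} {x : ℕ} (hx : f x = none) :
    Branching n f 1 (f.upd x '' Set.Iio n) := by
  refine .base f x _ hx ?_ ?_
  · rintro g ⟨y, -, rfl⟩
    exact ⟨PFn.pext_upd hx y, f.dom_upd x y⟩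
  · rw [Set.ncard_image_of_injective _ (f.upd_injective x), ← Finset.coe_range,
      Set.ncard_coe_finset, Finset.card_range]

theorem exists_of_finDom {f : PFn} (hf : f.FinDom) : ∃ U, Branching n f 1 U :=
  let ⟨_, hx⟩ := hf.exists_eq_none
  ⟨_, image_upd hx⟩

theorem exists_succ_refines {f : PFn} {k : ℕ} {U : Set PFn} (h : Branching n f k U)
    (hf : f.FinDom) : ∃ U', Branching n f (k + 1) U' ∧ Refines U' U := by
  have hleaf : ∀ g ∈ U, ∃ V, Branching n g 1 V := fun g hg =>
    exists_of_finDom (h.finDom_of_mem hf g hg)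
  choose! V hV using hleaf
  refine ⟨_, .step f k U V h hV, ?_⟩
  simp only [Refines, Set.mem_iUnion]
  rintro g' ⟨g, hg, hg'⟩
  exact ⟨g, hg, (hV g hg).pext_of_mem g' hg'⟩

theorem exists_refines_of_le {f : PFn} {k m : ℕ} {U : Set PFn} (h : Branching n f k U)
    (hf : f.FinDom) (hkm : k ≤ m) : ∃ U', Branching n f m U' ∧ Refines U' U := by
  induction m, hkm using Nat.le_induction with
  | base => exact ⟨U, h, Refines.refl U⟩
  | succ m _ ih =>
    obtain ⟨U', hU', hU'U⟩ := ih
    obtain ⟨U'', hU'', hU''U'⟩ := hU'.exists_succ_refines hf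
    exact ⟨U'', hU'', hU''U'.trans hU'U⟩

theorem exists_eq_biUnion {f : PFn} {k : ℕ} {U : Set PFn} (h : Branching n f (k + 2) U) :
    ∃ (U₀ : Set PFn) (V : PFn → Set PFn), Branching n f (k + 1) U₀ ∧
      (∀ g ∈ U₀, Branching n g 1 (V g)) ∧ U = ⋃ g ∈ U₀, V g := by
  cases h with
  | step _ _ U₀ V h₀ hV => exact ⟨U₀, V, h₀, hV, rfl⟩

theorem exists_graft {f : PFn} {k : ℕ} {U₀ : Set PFn} (h₀ : Branching n f k U₀) (m : ℕ)
    {V : PFn → Set PFn} (hV : ∀ g ∈ U₀, Branching n g (m + 1) (V g)) :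
    ∃ U, Branching n f (k + (m + 1)) U ∧ U ⊆ ⋃ g ∈ U₀, V g := by
  induction m generalizing V with
  | zero => exact ⟨_, .step f k U₀ V h₀ hV, subset_rfl⟩
  | succ m ih =>
    choose! V₀ W hV₀ hW hVW using fun g hg => (hV g hg).exists_eq_biUnion
    obtain ⟨U', hU', hU'V₀⟩ := ih hV₀
    have hparent : ∀ h ∈ U', ∃ g ∈ U₀, h ∈ V₀ g := fun h hh => by
      simpa only [Set.mem_iUnion, exists_prop] using hU'V₀ hh
    choose! G hGU₀ hG using hparent
    refine ⟨_, .step f _ U' (fun h => W (G h) h) hU'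
      (fun h hh => hW (G h) (hGU₀ h hh) h (hG h hh)), ?_⟩
    simp only [Set.iUnion_subset_iff]
    intro h hh
    refine (Set.subset_biUnion_of_mem (u := W (G h)) (hG h hh)).trans ?_
    rw [← hVW (G h) (hGU₀ h hh)]
    exact Set.subset_biUnion_of_mem (hGU₀ h hh)

end Branching

section Blocks

variable {f : PFn} {Xi : Set PFn} {n : ℕ}

theorem Blocks.exists_mem_pext (hb : Blocks f Xi n) (hf : f.FinDom) : ∃ h ∈ Xi, PExt f h := by
  obtain ⟨U, hU⟩ := Branching.exists_of_finDom (n := n) hf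
  obtain ⟨h, hhU, hhXi⟩ := hb U ⟨1, le_rfl, hU⟩
  exact ⟨h, hhXi, hU.pext_of_mem h hhU⟩

theorem exists_branching_of_not_blocks (hb : ¬Blocks f Xi n) :
    ∃ k U, Branching n f k U ∧ U ∩ Xi = ∅ := by
  simp only [Blocks, IsBranching, not_forall, Set.not_nonempty_iff_eq_empty] at hb
  obtain ⟨U, ⟨k, -, hU⟩, hUXi⟩ := hb
  exact ⟨k, U, hU, hUXi⟩

theorem Blocks.exists_mem_blocks (hb : Blocks f Xi n) (hf : f.FinDom) (hXi : DownClosedAbove f Xi)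
    {k : ℕ} {U₀ : Set PFn} (hU₀ : Branching n f k U₀) (hfin : U₀.Finite) :
    ∃ g ∈ U₀, Blocks g Xi n := by
  by_contra! hnot
  choose! kg Ug hUg hUgXi using fun g hg => exists_branching_of_not_blocks (hnot g hg)
  obtain ⟨K, hK⟩ := (hfin.image kg).bddAbove
  have hpad : ∀ g ∈ U₀, ∃ V, Branching n g (K + 1) V ∧ V ∩ Xi = ∅ := fun g hg => by
    have hkg : kg g ≤ K + 1 := (hK ⟨g, hg, rfl⟩).trans (Nat.le_succ K)
    obtain ⟨V, hV, hVU⟩ := (hUg g hg).exists_refines_of_le (hU₀.finDom_of_mem hf g hg) hkg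
    exact ⟨V, hV, hVU.inter_eq_empty (hXi.mono (hU₀.pext_of_mem g hg))
      (hUg g hg).pext_of_mem (hUgXi g hg)⟩
  choose! V hV hVXi using hpad
  obtain ⟨U, hU, hUV⟩ := hU₀.exists_graft K hV
  obtain ⟨h, hhU, hhXi⟩ := hb U ⟨k + (K + 1), by omega, hU⟩
  obtain ⟨g, hg, hhV⟩ : ∃ g ∈ U₀, h ∈ V g := by simpa using hUV hhU
  exact (hVXi g hg).subset ⟨hhV, hhXi⟩

theorem Blocks.exists_upd (hb : Blocks f Xi n) (hf : f.FinDom) (hXi : DownClosedAbove f Xi)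
    {x : ℕ} (hx : f x = none) : ∃ y, Blocks (f.upd x y) Xi n := by
  obtain ⟨_, ⟨y, -, rfl⟩, hy⟩ :=
    hb.exists_mem_blocks hf hXi (Branching.image_upd hx) ((Set.finite_Iio n).image _)
  exact ⟨y, hy⟩

end Blocks

theorem exists_total_of_forall_extend (P : PFn → Prop) {f : PFn} (hf : P f)
    (hext : ∀ g, P g → ∀ x, ∃ g' y, P g' ∧ PExt g g' ∧ g' x = some y) :
    ∃ F : ℕ → ℕ, (∀ x y, f x = some y → F x = y) ∧
      ∀ g : PFn, g.FinDom → (∀ x y, g x = some y → F x = y) → ∃ g', P g' ∧ PExt g g' := by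
  choose! grow val hP hgrow hval using hext
  let s : ℕ → PFn := fun k => Nat.rec f (fun k g => grow g k) k
  have hsP : ∀ k, P (s k) := fun k => by
    induction k with
    | zero => exact hf
    | succ k ih => exact hP _ ih k
  have hmono : ∀ ⦃j k⦄, j ≤ k → PExt (s j) (s k) :=
    Nat.rel_of_forall_rel_succ_of_le PExt fun k => hgrow _ (hsP k) k
  have hsF : ∀ x, s (x + 1) x = some (val (s x) x) := fun x => hval _ (hsP x) x
  refine ⟨fun x => val (s x) x, fun x y hxy => ?_, fun g hg hgF => ?_⟩
  · exact Option.some.inj ((hsF x).symm.trans (hmono (Nat.zero_le (x + 1)) x y hxy))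
  · obtain ⟨b, hb⟩ := hg.bddAbove
    refine ⟨s (b + 1), hsP (b + 1), fun x y hxy => ?_⟩
    have hxb : x ≤ b := hb (show g x ≠ none by simp [hxy])
    exact hmono (by omega : x + 1 ≤ b + 1) x y (hgF x y hxy ▸ hsF x)

theorem blocking_total_completion_general (f : PFn) (hf : f.FinDom) (n : ℕ)
    (Xi : Set PFn) (hXi : FamilyOfCompletions f Xi) (hb : Blocks f Xi n) :
    ∃ F : ℕ → ℕ, (∀ x y, f x = some y → F x = y) ∧
      ∀ g : PFn, g.FinDom → PExt f g → (∀ x y, g x = some y → F x = y) → g ∈ Xi := by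
  let P : PFn → Prop := fun g => g.FinDom ∧ DownClosedAbove g Xi ∧ Blocks g Xi n
  have hext : ∀ g, P g → ∀ x, ∃ g' y, P g' ∧ PExt g g' ∧ g' x = some y := by
    rintro g ⟨hgfin, hgXi, hgb⟩ x
    cases hgx : g x with
    | some y => exact ⟨g, y, ⟨hgfin, hgXi, hgb⟩, PExt.refl g, hgx⟩
    | none =>
      obtain ⟨y, hy⟩ := hgb.exists_upd hgfin hgXi hgx
      have hgg' := g.pext_upd hgx y
      exact ⟨g.upd x y, y, ⟨hgfin.upd x y, hgXi.mono hgg', hy⟩, hgg', g.upd_self x y⟩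
  obtain ⟨F, hfF, hF⟩ := exists_total_of_forall_extend P ⟨hf, hXi.2, hb⟩ hext
  refine ⟨F, hfF, fun g hg hfg hgF => ?_⟩
  obtain ⟨g', ⟨hg'fin, -, hg'b⟩, hgg'⟩ := hF g hg hgF
  obtain ⟨h, hhXi, hg'h⟩ := hg'b.exists_mem_pext hg'fin
  exact hXi.2 h hhXi g hfg (hgg'.trans hg'h)

theorem blocking_total_completion (f : PFn) (hf : f.FinDom) (n : ℕ) (hn : 1 ≤ n)
    (Xi : Set PFn) (hXi : FamilyOfCompletions f Xi) (hb : Blocks f Xi n) :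
    ∃ F : ℕ → ℕ, (∀ x y, f x = some y → F x = y) ∧
      ∀ g : PFn, g.FinDom → PExt f g → (∀ x y, g x = some y → F x = y) → g ∈ Xi :=
  blocking_total_completion_general f hf n Xi hXi hb
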